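/- Let K be an algebraically closed field of characteristic 0 and let n ≥ 3. If S is a set of 4 distinct points of ℙ^n not lying on a common plane (their representative vectors span a subspace of K^{n+1} of dimension ≥ 4), then the double points 2S impose independent conditions on cubic forms: the subspace of homogeneous degree-3 forms in x_0,…,x_n whose first-order partial derivatives all vanish at every point of S has dimension exactly binom(n+3, 3) − 4(n+1). (Equivalently, ν_3(S) ∉ Ter_4(V_n^3).) -/

import Mathlib

/-!
Linearly independent points `p a` admit linear forms `ℓ a` with `ℓ a (p b) = δ_{ab}`. For
`d ≥ 3` the forms `ℓ a ^ d` and `ℓ a ^ (d - 1) * X i` have vanishing gradient at every `p b` with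
`b ≠ a`, while at `p a` their gradients are `d • ∇ℓ a` and `eᵢ + (d - 1) (p a)ᵢ • ∇ℓ a`. When
`d ≠ 0` in `K`, these span all of `(K^N)^ι`, so evaluating gradients at the points is a surjection
from degree-`d` forms onto `(K^N)^ι`, and rank–nullity gives the dimension of its kernel.
-/

open MvPolynomial

/-- Homogeneous forms of degree `d` in `N` variables all of whose first-order partial
derivatives vanish at every point of the family `p`. -/
noncomputable def dblVanish (K : Type) [Field K] (N d : ℕ) {ι : Type} (p : ι → (Fin N → K)) :
    Submodule K (MvPolynomial (Fin N) K) :=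
  homogeneousSubmodule (Fin N) K d ⊓
    ⨅ (a : ι) (i : Fin N),
      LinearMap.ker ((aeval (p a)).toLinearMap ∘ₗ (pderiv i).toLinearMap)

theorem MvPolynomial.finrank_homogeneousSubmodule (σ R : Type*) [Fintype σ] [CommRing R]
    [Nontrivial R] (d : ℕ) :
    Module.finrank R (homogeneousSubmodule σ R d) = (Fintype.card σ).multichoose d := by
  classical
  rw [show homogeneousSubmodule σ R d = restrictSupport R {m | m.degree = d} from
      homogeneousSubmodule_eq_finsupp_supported σ R d,
    Module.finrank_eq_nat_card_basis (basisRestrictSupport R _), ← Sym.card_sym_eq_multichoose,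
    ← Nat.card_eq_fintype_card]
  exact Nat.card_congr ((Sym.equivNatSum σ d).trans (Equiv.subtypeEquivRight fun _ => Iff.rfl)).symm

theorem LinearIndependent.exists_linearMap_apply_eq_single {ι K V : Type*} [Fintype ι]
    [DecidableEq ι] [Field K] [AddCommGroup V] [Module K V] {v : ι → V}
    (hv : LinearIndependent K v) : ∃ g : V →ₗ[K] ι → K, ∀ i, g (v i) = Pi.single i 1 := by
  obtain ⟨g, hg⟩ := (Fintype.linearCombination K v).exists_leftInverse_of_injective
    (LinearMap.ker_eq_bot.mpr hv.fintypeLinearCombination_injective)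
  exact ⟨g, fun i => by simpa using LinearMap.congr_fun hg (Pi.single i 1)⟩

theorem Submodule.eq_top_of_single_single_mem {ι σ K : Type*} [Fintype ι] [DecidableEq ι]
    [Fintype σ] [DecidableEq σ] [Semiring K] {W : Submodule K (ι → σ → K)}
    (h : ∀ a i, Pi.single a (Pi.single i 1) ∈ W) : W = ⊤ := by
  rw [eq_top_iff, ← (Pi.basis fun _ : ι => Pi.basisFun K σ).span_eq, Submodule.span_le]
  rintro _ ⟨⟨a, i⟩, rfl⟩
  simpa using h a i

namespace MvPolynomial

section Gradient

variable {σ ι K : Type*} [CommRing K]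

noncomputable def gradientAt (x : σ → K) : MvPolynomial σ K →ₗ[K] σ → K :=
  LinearMap.pi fun j => (aeval x).toLinearMap ∘ₗ (pderiv j).toLinearMap

noncomputable def gradientsAt (p : ι → σ → K) : MvPolynomial σ K →ₗ[K] ι → σ → K :=
  LinearMap.pi fun a => gradientAt (p a)

variable (x : σ → K) (p : ι → σ → K) (f g : MvPolynomial σ K)

@[simp]
theorem gradientAt_apply (j : σ) : gradientAt x f j = aeval x (pderiv j f) := rfl

@[simp]
theorem gradientsAt_apply (a : ι) : gradientsAt p f a = gradientAt (p a) f := rfl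

theorem gradientAt_mul :
    gradientAt x (f * g) = aeval x f • gradientAt x g + aeval x g • gradientAt x f := by
  ext j
  simp [Derivation.leibniz]

theorem gradientAt_pow (k : ℕ) :
    gradientAt x (f ^ k) = (k * aeval x f ^ (k - 1)) • gradientAt x f := by
  ext j
  simp [Derivation.leibniz_pow, mul_assoc]

theorem gradientAt_X [DecidableEq σ] (i : σ) : gradientAt x (X i) = Pi.single i 1 := by
  ext j
  simp [pderiv_X, Pi.single_apply, eq_comm]

variable {p} [DecidableEq ι] {L : MvPolynomial σ K} {a : ι} {k : ℕ}

theorem gradientsAt_pow_eq_single (hL : ∀ b, aeval (p b) L = (Pi.single a 1 : ι → K) b)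
    (hk : 2 ≤ k) : gradientsAt p (L ^ k) = Pi.single a ((k : K) • gradientAt (p a) L) := by
  ext b : 1
  simp only [gradientsAt_apply, gradientAt_pow, hL]
  rcases eq_or_ne b a with rfl | hba
  · simp
  · simp [hba, zero_pow (by omega : k - 1 ≠ 0)]

theorem gradientsAt_pow_mul_X_eq_single [DecidableEq σ]
    (hL : ∀ b, aeval (p b) L = (Pi.single a 1 : ι → K) b) (hk : 2 ≤ k) (i : σ) :
    gradientsAt p (L ^ k * X i) =
      Pi.single a (Pi.single i 1 + (k * p a i) • gradientAt (p a) L) := by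
  ext b : 1
  simp only [gradientsAt_apply, gradientAt_mul, gradientAt_pow, gradientAt_X, map_pow, hL, aeval_X]
  rcases eq_or_ne b a with rfl | hba
  · simp [smul_smul, mul_comm]
  · simp [hba, zero_pow (by omega : k - 1 ≠ 0), zero_pow (by omega : k ≠ 0)]

end Gradient

theorem map_gradientsAt_homogeneousSubmodule_eq_top {ι σ K : Type*} [Fintype ι] [Fintype σ]
    [Field K] {p : ι → σ → K} (hp : LinearIndependent K p) {d : ℕ} (hd : 3 ≤ d)
    (hdK : (d : K) ≠ 0) : (homogeneousSubmodule σ K d).map (gradientsAt p) = ⊤ := by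
  classical
  obtain ⟨g, hg⟩ := hp.exists_linearMap_apply_eq_single
  set ℓ := (LinearMap.toMatrix' g).toMvPolynomial
  have hℓ : ∀ a b, aeval (p b) (ℓ a) = (Pi.single a 1 : ι → K) b := fun a b => by
    rw [aeval_eq_eval, Matrix.toMvPolynomial_eval_eq_apply, LinearMap.toMatrix'_mulVec, hg,
      Pi.single_comm]
  have hℓ_hom : ∀ a, (ℓ a).IsHomogeneous 1 := Matrix.toMvPolynomial_isHomogeneous _
  set W := (homogeneousSubmodule σ K d).map (gradientsAt p)
  refine Submodule.eq_top_of_single_single_mem fun a i => ?_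
  set c := gradientAt (p a) (ℓ a)
  have hc : Pi.single a ((d : K) • c) ∈ W :=
    ⟨ℓ a ^ d, by simpa using (hℓ_hom a).pow d, gradientsAt_pow_eq_single (hℓ a) (by omega)⟩
  have hcX : Pi.single a (Pi.single i 1 + (((d - 1 : ℕ) : K) * p a i) • c) ∈ W := by
    refine ⟨ℓ a ^ (d - 1) * X i, ?_, gradientsAt_pow_mul_X_eq_single (hℓ a) (by omega) i⟩
    have := ((hℓ_hom a).pow (d - 1)).mul (isHomogeneous_X K i)
    rwa [one_mul, Nat.sub_add_cancel (by omega)] at this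
  convert W.sub_mem hcX (W.smul_mem ((((d - 1 : ℕ) : K) * p a i) / d) hc) using 1
  rw [← Pi.single_smul, ← Pi.single_sub, smul_smul, div_mul_cancel₀ _ hdK, add_sub_cancel_right]

end MvPolynomial

theorem dblVanish_eq_inf_ker {K : Type} [Field K] {N : ℕ} (d : ℕ) {ι : Type}
    (p : ι → Fin N → K) :
    dblVanish K N d p = homogeneousSubmodule (Fin N) K d ⊓ LinearMap.ker (gradientsAt p) := by
  simp only [dblVanish, gradientsAt, gradientAt, LinearMap.ker_pi]

theorem finrank_dblVanish_add_card_mul {K : Type} [Field K] {N d : ℕ} {ι : Type} [Fintype ι]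
    {p : ι → Fin N → K} (hp : LinearIndependent K p) (hd : 3 ≤ d) (hdK : (d : K) ≠ 0) :
    Module.finrank K (dblVanish K N d p) + Fintype.card ι * N = N.multichoose d := by
  have := Module.Finite.iff_fg.mpr (homogeneousSubmodule_fg (Fin N) K d)
  have hrn :=
    ((gradientsAt p).domRestrict (homogeneousSubmodule (Fin N) K d)).finrank_range_add_finrank_ker
  rw [LinearMap.range_domRestrict, map_gradientsAt_homogeneousSubmodule_eq_top hp hd hdK,
    finrank_top, LinearMap.ker_domRestrict, ← Submodule.finrank_map_subtype_eq,
    Submodule.map_comap_subtype, ← dblVanish_eq_inf_ker, finrank_homogeneousSubmodule] at hrn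
  simpa [Module.finrank_pi_fintype, add_comm, mul_comm] using hrn

theorem second_terracini_cubic_noncoplanar_general
    {K : Type} [Field K] [CharZero K]
    (n : ℕ)
    (S : Fin 4 → (Fin (n + 1) → K))
    (hncop : 4 ≤ Module.finrank K ↥(Submodule.span K (Set.range S))) :
    Module.finrank K ↥(dblVanish K (n + 1) 3 S) + 4 * (n + 1)
      = Nat.choose (n + 3) 3 := by
  have hS : LinearIndependent K S := by
    rw [linearIndependent_iff_card_eq_finrank_span, Fintype.card_fin]
    exact le_antisymm hncop (by simpa using finrank_range_le_card (R := K) S)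
  have h := finrank_dblVanish_add_card_mul hS le_rfl (by norm_num : ((3 : ℕ) : K) ≠ 0)
  rwa [Fintype.card_fin, Nat.multichoose_eq, show n + 1 + 3 - 1 = n + 3 by omega] at h

/-- **Non-coplanar quadruples are not in `Ter₄` of the cubic Veronese variety.**  Let `n ≥ 3`.
If `S` is a set of `4` distinct points of `ℙⁿ` not lying on a common plane (their
representatives span a subspace of `K^{n+1}` of dimension `≥ 4`), then the double points `2S`
impose independent conditions on cubic forms: the space of cubic forms singular at every point
of `S` has dimension exactly `C(n + 3, 3) - 4 (n + 1)`, i.e. `ν₃(S) ∉ Ter₄(Vₙ³)`. -/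
theorem second_terracini_cubic_noncoplanar
    {K : Type} [Field K] [IsAlgClosed K] [CharZero K]
    (n : ℕ) (hn : 3 ≤ n)
    (S : Fin 4 → (Fin (n + 1) → K))
    (hS0 : ∀ i, S i ≠ 0)
    (hSd : ∀ i j, i ≠ j → ∀ c : K, S i ≠ c • S j)
    (hncop : 4 ≤ Module.finrank K ↥(Submodule.span K (Set.range S))) :
    Module.finrank K ↥(dblVanish K (n + 1) 3 S) + 4 * (n + 1)
      = Nat.choose (n + 3) 3 :=
  second_terracini_cubic_noncoplanar_general n S hncop
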